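/- arXiv:2511.05339 — 3 statements merged into one kernel-verified Lean document; each statement's English description precedes it below -/
import Mathlib

section
/- Let f : ℝⁿ → ℝ be a convex, twice continuously differentiable function whose gradient ∇f is Lipschitz continuous with Lipschitz constant L > 0, and suppose there exists x* ∈ ℝⁿ with f(x*) = inf_{x ∈ ℝⁿ} f(x). Define Ψ : ℝⁿ → ℝⁿ by Ψ(x) = x − (1/L) ∇f(x). Then for every k ∈ ℕ and every x ∈ ℝⁿ it holds that f(Ψ^k(x)) − f(x*) ≤ (2L / (k + 4)) ‖x − x*‖². -/
set_option maxHeartbeats 1000000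

open InnerProductSpace Set Filter Topology
open scoped RealInnerProductSpace

section aux
variable {F : Type*} [NormedAddCommGroup F] [InnerProductSpace ℝ F] [CompleteSpace F]

lemma line_hasDerivAt (f : F → ℝ) (hf : Differentiable ℝ f) (x v : F) (t : ℝ) :
    HasDerivAt (fun s : ℝ => f (x + s • v)) ⟪gradient f (x + t • v), v⟫_ℝ t := by
  have h1 : HasDerivAt (fun s : ℝ => x + s • v) v t := by
    simpa using ((hasDerivAt_id t).smul_const v).const_add x
  have h2 : HasFDerivAt f (toDual ℝ F (gradient f (x + t • v))) (x + t • v) :=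
    (hf (x + t • v)).hasGradientAt
  have h3 := h2.comp_hasDerivAt t h1
  simp at h3 ⊢
  exact h3

lemma descent_ineq (f : F → ℝ) (hf : Differentiable ℝ f)
    (L : ℝ) (hL : 0 < L) (hlip : LipschitzWith L.toNNReal (gradient f)) (x y : F) :
    f y ≤ f x + ⟪gradient f x, y - x⟫_ℝ + L / 2 * ‖y - x‖ ^ 2 := by
  set v := y - x with hv
  set φ : ℝ → ℝ := fun t => ⟪gradient f (x + t • v), v⟫_ℝ with hφ
  have hgc : Continuous (gradient f) := hlip.continuous
  have hcont : Continuous φ := by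
    apply Continuous.inner
    · exact hgc.comp (by continuity)
    · exact continuous_const
  have hint : ∫ t in (0:ℝ)..1, φ t = f y - f x := by
    have := intervalIntegral.integral_eq_sub_of_hasDerivAt
      (f := fun t : ℝ => f (x + t • v)) (f' := φ)
      (fun t _ => line_hasDerivAt f hf x v t) (hcont.intervalIntegrable 0 1)
    simpa [hv] using this
  have hbound : ∀ t ∈ Icc (0:ℝ) 1, φ t ≤ φ 0 + L * t * ‖v‖ ^ 2 := by
    intro t ht
    have h1 : φ t - φ 0 = ⟪gradient f (x + t • v) - gradient f x, v⟫_ℝ := by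
      simp [hφ, inner_sub_left]
    have h2 : ⟪gradient f (x + t • v) - gradient f x, v⟫_ℝ ≤
        ‖gradient f (x + t • v) - gradient f x‖ * ‖v‖ := real_inner_le_norm _ _
    have h3 : ‖gradient f (x + t • v) - gradient f x‖ ≤ L * (t * ‖v‖) := by
      have := hlip.dist_le_mul (x + t • v) x
      rw [Real.coe_toNNReal _ hL.le] at this
      simpa [dist_eq_norm, norm_smul, abs_of_nonneg ht.1] using this
    nlinarith [norm_nonneg v, mul_le_mul_of_nonneg_right h3 (norm_nonneg v)]
  have i1 : IntervalIntegrable (fun _ : ℝ => φ 0) MeasureTheory.volume 0 1 :=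
    intervalIntegrable_const
  have i2 : IntervalIntegrable (fun t : ℝ => L * t * ‖v‖ ^ 2) MeasureTheory.volume 0 1 :=
    (by continuity : Continuous fun t : ℝ => L * t * ‖v‖ ^ 2).intervalIntegrable 0 1
  have hmono : ∫ t in (0:ℝ)..1, φ t ≤ ∫ t in (0:ℝ)..1, (φ 0 + L * t * ‖v‖ ^ 2) := by
    apply intervalIntegral.integral_mono_on zero_le_one (hcont.intervalIntegrable 0 1) (i1.add i2)
    exact hbound
  have hval : ∫ t in (0:ℝ)..1, (φ 0 + L * t * ‖v‖ ^ 2) = φ 0 + L / 2 * ‖v‖ ^ 2 := by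
    rw [intervalIntegral.integral_add i1 i2]
    have : (fun t : ℝ => L * t * ‖v‖ ^ 2) = fun t : ℝ => (L * ‖v‖ ^ 2) * t := by
      funext t; ring
    rw [this, intervalIntegral.integral_const_mul, integral_id]
    simp; ring
  have hφ0 : φ 0 = ⟪gradient f x, y - x⟫_ℝ := by simp [hφ, hv]
  rw [hint] at hmono
  rw [hval, hφ0] at hmono
  linarith

lemma convex_grad_ineq (f : F → ℝ) (hconv : ConvexOn ℝ Set.univ f) (hf : Differentiable ℝ f)
    (x y : F) : f x + ⟪gradient f x, y - x⟫_ℝ ≤ f y := by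
  set v := y - x with hv
  have hd : HasDerivAt (fun t : ℝ => f (x + t • v)) ⟪gradient f x, v⟫_ℝ 0 := by
    simpa using line_hasDerivAt f hf x v 0
  have hslope : ∀ t ∈ Ioc (0:ℝ) 1, (f (x + t • v) - f x) / t ≤ f y - f x := by
    intro t ht
    have hc := hconv.2 (mem_univ x) (mem_univ y)
      (show (0:ℝ) ≤ 1 - t by linarith [ht.2]) ht.1.le (show 1 - t + t = 1 by ring)
    have hpt : (1 - t) • x + t • y = x + t • v := by
      rw [hv]; module
    rw [hpt] at hc
    rw [div_le_iff₀ ht.1]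
    simp only [smul_eq_mul] at hc
    nlinarith
  have htend : Tendsto (fun t : ℝ => (f (x + t • v) - f x) / t) (𝓝[>] 0)
      (𝓝 ⟪gradient f x, v⟫_ℝ) := by
    have := hasDerivAt_iff_tendsto_slope.mp hd
    have h2 := this.mono_left (nhdsWithin_mono _ (fun t ht => ht.ne' : Ioi (0:ℝ) ⊆ {0}ᶜ))
    refine h2.congr (fun t => ?_)
    simp [slope_def_field]
  have : ⟪gradient f x, v⟫_ℝ ≤ f y - f x := by
    refine le_of_tendsto htend ?_
    filter_upwards [Ioc_mem_nhdsGT_of_mem (by norm_num : (0:ℝ) ∈ Ico (0:ℝ) 1)] with t ht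
    exact hslope t ht
  linarith

end aux

/-- Gradient descent with step size `1/L` for a convex C² function with `L`-Lipschitz gradient
attaining its infimum at `x*`: the objective gap after `k` steps satisfies
`f(Ψ^k(x)) − f(x*) ≤ (2L/(k+4)) ‖x − x*‖²`. -/
theorem gradient_descent_value_convergence
    (n : ℕ) (f : EuclideanSpace ℝ (Fin n) → ℝ)
    (hconv : ConvexOn ℝ Set.univ f) (hf : ContDiff ℝ 2 f)
    (L : ℝ) (hL : 0 < L)
    (hlip : LipschitzWith L.toNNReal (gradient f))
    (xstar : EuclideanSpace ℝ (Fin n))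
    (hmin : ∀ y : EuclideanSpace ℝ (Fin n), f xstar ≤ f y)
    (Ψ : EuclideanSpace ℝ (Fin n) → EuclideanSpace ℝ (Fin n))
    (hΨ : ∀ x, Ψ x = x - (1 / L) • gradient f x) :
    ∀ (k : ℕ) (x : EuclideanSpace ℝ (Fin n)),
      f (Ψ^[k] x) - f xstar ≤ (2 * L / ((k : ℝ) + 4)) * ‖x - xstar‖ ^ 2 := by
  intro k x
  have hdiff : Differentiable ℝ f := hf.differentiable (by norm_num)
  have hgstar : gradient f xstar = 0 := by
    have hloc : IsLocalMin f xstar := Filter.Eventually.of_forall hmin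
    have := hloc.fderiv_eq_zero
    simp [gradient, this]
  -- descent step
  have hdesc : ∀ z, f (Ψ z) ≤ f z - 1 / (2 * L) * ‖gradient f z‖ ^ 2 := by
    intro z
    have h := descent_ineq f hdiff L hL hlip z (Ψ z)
    rw [hΨ z] at h ⊢
    have h1 : z - (1 / L) • gradient f z - z = -((1 / L) • gradient f z) := by abel
    rw [h1] at h
    rw [inner_neg_right, real_inner_smul_right, real_inner_self_eq_norm_sq, norm_neg,
      norm_smul] at h
    have hL' : ‖(1:ℝ)/L‖ = 1/L := by
      rw [Real.norm_eq_abs]; exact abs_of_pos (by positivity)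
    rw [hL'] at h
    have : (1 / L * ‖gradient f z‖) ^ 2 = 1 / L ^ 2 * ‖gradient f z‖ ^ 2 := by ring
    rw [this] at h
    have hexp : f z + -(1 / L * ‖gradient f z‖ ^ 2) + L / 2 * (1 / L ^ 2 * ‖gradient f z‖ ^ 2)
        = f z - 1 / (2 * L) * ‖gradient f z‖ ^ 2 := by field_simp; ring
    linarith [hexp ▸ h]
  -- convexity gap bound
  have hgap : ∀ z, f z - f xstar ≤ ⟪gradient f z, z - xstar⟫_ℝ := by
    intro z
    have h := convex_grad_ineq f hconv hdiff z xstar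
    have : ⟪gradient f z, xstar - z⟫_ℝ = -⟪gradient f z, z - xstar⟫_ℝ := by
      rw [← inner_neg_right]; congr 1; abel
    rw [this] at h; linarith
  -- gradient norm lower bound on gap
  have hgn : ∀ z, ‖gradient f z‖ ^ 2 ≤ 2 * L * (f z - f xstar) := by
    intro z
    have h1 := hdesc z
    have h2 := hmin (Ψ z)
    have h3 : 1 / (2 * L) * ‖gradient f z‖ ^ 2 ≤ f z - f xstar := by linarith
    have := mul_le_mul_of_nonneg_left h3 (by positivity : (0:ℝ) ≤ 2 * L)
    calc ‖gradient f z‖ ^ 2 = 2 * L * (1 / (2 * L) * ‖gradient f z‖ ^ 2) := by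
          field_simp
      _ ≤ 2 * L * (f z - f xstar) := this
  -- distance monotonicity
  have hdist : ∀ z, ‖Ψ z - xstar‖ ≤ ‖z - xstar‖ := by
    intro z
    have hsq : ‖Ψ z - xstar‖ ^ 2 ≤ ‖z - xstar‖ ^ 2 := by
      have hz : Ψ z - xstar = (z - xstar) - (1 / L) • gradient f z := by
        rw [hΨ z]; abel
      rw [hz, norm_sub_sq_real, norm_smul, real_inner_smul_right]
      have hL' : ‖(1:ℝ)/L‖ = 1/L := by
        rw [Real.norm_eq_abs]; exact abs_of_pos (by positivity)
      rw [hL']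
      have hinner : f z - f xstar ≤ ⟪z - xstar, gradient f z⟫_ℝ := by
        rw [real_inner_comm]; exact hgap z
      have h1 := hgn z
      have h2 : ‖gradient f z‖ ^ 2 / (2 * L) ≤ ⟪z - xstar, gradient f z⟫_ℝ := by
        rw [div_le_iff₀ (mul_pos two_pos hL)] at *
        nlinarith [hgn z, hmin z]
      have hexp : (1 / L * ‖gradient f z‖) ^ 2 = 1 / L ^ 2 * ‖gradient f z‖ ^ 2 := by ring
      rw [hexp]
      have := mul_le_mul_of_nonneg_left h2 (by positivity : (0:ℝ) ≤ 2 * (1/L))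
      have heq : 2 * (1/L) * (‖gradient f z‖ ^ 2 / (2 * L)) = 1 / L ^ 2 * ‖gradient f z‖ ^ 2 := by
        field_simp
      rw [heq] at this
      linarith
    have h' := Real.sqrt_le_sqrt hsq
    rwa [Real.sqrt_sq (norm_nonneg _), Real.sqrt_sq (norm_nonneg _)] at h'
  -- quadratic upper bound at the minimizer
  have hbase : ∀ z, f z - f xstar ≤ L / 2 * ‖z - xstar‖ ^ 2 := by
    intro z
    have h := descent_ineq f hdiff L hL hlip xstar z
    rw [hgstar, inner_zero_left] at h
    linarith
  by_cases hx : x = xstar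
  · subst hx
    have hfix : Ψ x = x := by rw [hΨ, hgstar]; simp
    rw [Function.iterate_fixed hfix]
    simp
  · have hR0 : 0 < ‖x - xstar‖ := by
      rw [norm_pos_iff, sub_ne_zero]; exact hx
    obtain ⟨R, hRdef⟩ : ∃ R : ℝ, R = ‖x - xstar‖ := ⟨_, rfl⟩
    rw [← hRdef]
    have hR : 0 < R := hRdef ▸ hR0
    obtain ⟨c, hc⟩ : ∃ c : ℝ, c = 2 * L * R ^ 2 := ⟨_, rfl⟩
    have hcpos : 0 < c := by
      rw [hc]; exact mul_pos (mul_pos two_pos hL) (pow_pos hR 2)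
    have key : ∀ m : ℕ, f (Ψ^[m] x) - f xstar ≤ c / ((m : ℝ) + 4)
        ∧ ‖Ψ^[m] x - xstar‖ ≤ R := by
      intro m
      induction m with
      | zero =>
        refine ⟨?_, by simp [hRdef]⟩
        simp only [Function.iterate_zero_apply, Nat.cast_zero]
        have he : c / ((0:ℝ) + 4) = L / 2 * R ^ 2 := by rw [hc]; ring
        rw [he, hRdef]
        exact hbase x
      | succ m ih =>
        obtain ⟨ih1, ih2⟩ := ih
        have hiter : Ψ^[m + 1] x = Ψ (Ψ^[m] x) := Function.iterate_succ_apply' Ψ m x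
        obtain ⟨z, hzdef⟩ : ∃ z, Ψ^[m] x = z := ⟨_, rfl⟩
        rw [hzdef] at ih1 ih2 hiter
        have hδ0 : 0 ≤ f z - f xstar := sub_nonneg.2 (hmin z)
        have hCS : f z - f xstar ≤ ‖gradient f z‖ * R := by
          have h1 := hgap z
          have h2 := real_inner_le_norm (gradient f z) (z - xstar)
          have h3 := mul_le_mul_of_nonneg_left ih2 (norm_nonneg (gradient f z))
          linarith
        have hstep : f (Ψ z) - f xstar ≤ (f z - f xstar) - (f z - f xstar) ^ 2 / c := by
          have h1 := hdesc z
          have hq : (f z - f xstar) ^ 2 / c ≤ ‖gradient f z‖ ^ 2 / (2 * L) := by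
            rw [div_le_div_iff₀ hcpos (mul_pos two_pos hL), hc]
            nlinarith [mul_le_mul hCS hCS hδ0 (mul_nonneg (norm_nonneg _) hR.le),
              hL, hR]
          have hrng : 1 / (2 * L) * ‖gradient f z‖ ^ 2 = ‖gradient f z‖ ^ 2 / (2 * L) := by
            ring
          linarith
        constructor
        · rw [hiter]
          have hspos : (0:ℝ) < (m : ℝ) + 4 := by positivity
          have hδs : (f z - f xstar) * ((m : ℝ) + 4) ≤ c := (le_div_iff₀ hspos).mp ih1
          have hA : 0 ≤ c - (f z - f xstar) * ((m : ℝ) + 4) := by linarith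
          have hcd : f z - f xstar ≤ c := by nlinarith
          have hfinal : (f z - f xstar) - (f z - f xstar) ^ 2 / c ≤ c / (((m : ℝ) + 4) + 1) := by
            rw [le_div_iff₀ (by linarith : (0:ℝ) < ((m : ℝ) + 4) + 1)]
            have hq : (f z - f xstar) ^ 2 / c * c = (f z - f xstar) ^ 2 :=
              div_mul_cancel₀ _ hcpos.ne'
            nlinarith [mul_nonneg hA (sub_nonneg.2 hcd), hq, sq_nonneg (f z - f xstar), hcpos.le]
          have hcast : ((m + 1 : ℕ) : ℝ) + 4 = ((m : ℝ) + 4) + 1 := by push_cast; ring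
          rw [hcast]
          linarith
        · rw [hiter]
          exact le_trans (hdist z) ih2
    obtain ⟨h1, -⟩ := key k
    have : 2 * L / ((k : ℝ) + 4) * R ^ 2 = c / ((k : ℝ) + 4) := by
      rw [hc]; ring
    rw [this]
    exact h1
end

section
/- Let g : ℝⁿ → ℝ⁻ be defined on a set containing all points below, let f, f̂ : D → D be self-maps of a set D ⊆ ℝⁿ, and let ĝ : D → ℝ be a function. Assume: f is Lipschitz on D with constant L_f > 1; g is Lipschitz on D with constant L_g; ‖f(z) − f̂(z)‖ ≤ ε_f for all z ∈ D; and |g(z) − ĝ(z)| ≤ ε_g for all z ∈ D. Then for every N ∈ ℕ and every z ∈ D it holds that |g(f^N(z)) − ĝ(f̂^N(z))| ≤ L_g · ((L_f)^N − 1)/(L_f − 1) · ε_f + ε_g, where f^N, f̂^N denote N-fold iterates. -/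
open Finset

/-- The error `ε` made at one step is amplified by a factor `L` at each later step. -/
theorem dist_iterate_le_geom_sum_mul {X : Type*} [PseudoMetricSpace X] {D : Set X}
    {f fhat : X → X} (hf : Set.MapsTo f D D) (hfhat : Set.MapsTo fhat D D) {L ε : ℝ}
    (hL : 0 ≤ L) (hlip : ∀ z ∈ D, ∀ w ∈ D, dist (f z) (f w) ≤ L * dist z w)
    (hε : ∀ z ∈ D, dist (f z) (fhat z) ≤ ε) (k : ℕ) {z : X} (hz : z ∈ D) :
    dist (f^[k] z) (fhat^[k] z) ≤ (∑ i ∈ range k, L ^ i) * ε := by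
  induction k with
  | zero => simp
  | succ k ih =>
    set a := f^[k] z
    set b := fhat^[k] z
    have ha : a ∈ D := hf.iterate k hz
    have hb : b ∈ D := hfhat.iterate k hz
    rw [Function.iterate_succ_apply', Function.iterate_succ_apply', geom_sum_succ]
    calc dist (f a) (fhat b) ≤ dist (f a) (f b) + dist (f b) (fhat b) := dist_triangle _ _ _
      _ ≤ L * ((∑ i ∈ range k, L ^ i) * ε) + ε :=
          add_le_add ((hlip a ha b hb).trans (mul_le_mul_of_nonneg_left ih hL)) (hε b hb)
      _ = (L * ∑ i ∈ range k, L ^ i + 1) * ε := by ring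

/-- Composite error estimate: if `f` is `L_f`-Lipschitz (`L_f > 1`) and `g` is `L_g`-Lipschitz
on a set `D` into which `f, f̂` map, `‖f − f̂‖ ≤ ε_f` and `|g − ĝ| ≤ ε_g` on `D`, then
`|g(f^N(z)) − ĝ(f̂^N(z))| ≤ L_g (L_f^N − 1)/(L_f − 1) ε_f + ε_g` on `D`. -/
theorem composite_iterate_error
    (n : ℕ) (D : Set (EuclideanSpace ℝ (Fin n)))
    (f fhat : EuclideanSpace ℝ (Fin n) → EuclideanSpace ℝ (Fin n))
    (g ghat : EuclideanSpace ℝ (Fin n) → ℝ)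
    (hf : Set.MapsTo f D D) (hfhat : Set.MapsTo fhat D D)
    (Lf Lg εf εg : ℝ) (hLf : 1 < Lf) (hLg : 0 ≤ Lg)
    (hflip : ∀ z ∈ D, ∀ w ∈ D, ‖f z - f w‖ ≤ Lf * ‖z - w‖)
    (hglip : ∀ z ∈ D, ∀ w ∈ D, |g z - g w| ≤ Lg * ‖z - w‖)
    (hεf : ∀ z ∈ D, ‖f z - fhat z‖ ≤ εf)
    (hεg : ∀ z ∈ D, |g z - ghat z| ≤ εg) :
    ∀ (N : ℕ), ∀ z ∈ D,
      |g (f^[N] z) - ghat (fhat^[N] z)| ≤ Lg * ((Lf ^ N - 1) / (Lf - 1)) * εf + εg := by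
  intro N z hz
  set a := f^[N] z
  set b := fhat^[N] z
  have hb : b ∈ D := hfhat.iterate N hz
  have hab : ‖a - b‖ ≤ (∑ i ∈ range N, Lf ^ i) * εf := by
    simpa only [dist_eq_norm] using
      dist_iterate_le_geom_sum_mul hf hfhat (by linarith)
        (by simpa only [dist_eq_norm] using hflip) (by simpa only [dist_eq_norm] using hεf) N hz
  calc |g a - ghat b| ≤ |g a - g b| + |g b - ghat b| := abs_sub_le _ _ _
    _ ≤ Lg * ‖a - b‖ + εg := add_le_add (hglip a (hf.iterate N hz) b hb) (hεg b hb)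
    _ ≤ Lg * ((∑ i ∈ range N, Lf ^ i) * εf) + εg := by gcongr
    _ = Lg * ((Lf ^ N - 1) / (Lf - 1)) * εf + εg := by rw [geom_sum_eq hLf.ne']; ring
end

section
/- Let Ω ⊂ ℝⁿ be compact, 𝒰 ⊆ ℝ^m convex, and J : Ω × 𝒰 → ℝ a C² function that is convex in its second argument U for every x ∈ Ω. Suppose there exist U₀ ∈ 𝒰 and γ > 0 with the closed ball B_{3γ}(U₀) ⊆ 𝒰 such that for every x ∈ Ω there is U*(x) ∈ B_γ(U₀) with J(x, U*(x)) = inf_{U ∈ 𝒰} J(x,U). Define L₂ = max over x ∈ Ω, U ∈ B_{2γ}(U₀) of ‖∂²J/∂U²(x,U)‖ and set Ψ(x,U) = U − (1/L₂) ∂J/∂U(x,U). Then for every x ∈ Ω and every k ∈ ℕ the gradient-descent iterates in U starting at U₀ satisfy: (i) ‖Ψ^k(x, U₀) − U₀‖ ≤ 2γ, so in particular Ψ^k(x,U₀) ∈ B_{2γ}(U₀); and (ii) J(x, Ψ^k(x, U₀)) − J(x, U*(x)) ≤ (2 L₂ / (k + 4)) γ². -/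
open Metric Set
open scoped RealInnerProductSpace

variable {E : Type*} [NormedAddCommGroup E] [InnerProductSpace ℝ E] [CompleteSpace E]

lemma inner_gradient_eq (f : E → ℝ) (x y : E) : ⟪gradient f x, y⟫ = fderiv ℝ f x y := by
  rw [gradient, InnerProductSpace.toDual_symm_apply]

lemma hasDerivAt_line (f : E → ℝ) (hf : Differentiable ℝ f) (U d : E) (t : ℝ) :
    HasDerivAt (fun t : ℝ => f (U + t • d)) ⟪gradient f (U + t • d), d⟫ t := by
  have h1 : HasDerivAt (fun t : ℝ => U + t • d) d t := by
    simpa using ((hasDerivAt_id t).smul_const d).const_add U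
  have := (hf (U + t • d)).hasFDerivAt.comp_hasDerivAt t h1
  rw [inner_gradient_eq]; exact this

lemma norm_fderiv2_le (f : E → ℝ) (W : E) :
    ‖fderiv ℝ (fderiv ℝ f) W‖ ≤ ‖iteratedFDeriv ℝ 2 f W‖ := by
  refine ContinuousLinearMap.opNorm_le_bound _ (norm_nonneg _) (fun v => ?_)
  have h3 : ‖iteratedFDeriv ℝ 1 (fderiv ℝ f) W‖ = ‖iteratedFDeriv ℝ 2 f W‖ :=
    norm_iteratedFDeriv_fderiv
  have h4 : iteratedFDeriv ℝ 1 (fderiv ℝ f) W ![v] = fderiv ℝ (fderiv ℝ f) W v := by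
    simp [iteratedFDeriv_one_apply]
  calc ‖fderiv ℝ (fderiv ℝ f) W v‖ = ‖iteratedFDeriv ℝ 1 (fderiv ℝ f) W ![v]‖ := by rw [h4]
    _ ≤ ‖iteratedFDeriv ℝ 1 (fderiv ℝ f) W‖ * ∏ i, ‖(![v] : Fin 1 → E) i‖ :=
        (iteratedFDeriv ℝ 1 (fderiv ℝ f) W).le_opNorm _
    _ = ‖iteratedFDeriv ℝ 2 f W‖ * ‖v‖ := by rw [h3]; simp

lemma gradient_lipschitz_on (f : E → ℝ) (hf : ContDiff ℝ 2 f) {s : Set E} (hs : Convex ℝ s)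
    {L : ℝ} (hL : ∀ U ∈ s, ‖iteratedFDeriv ℝ 2 f U‖ ≤ L) {U V : E} (hU : U ∈ s) (hV : V ∈ s) :
    ‖gradient f V - gradient f U‖ ≤ L * ‖V - U‖ := by
  have h1 : ContDiff ℝ 1 (fderiv ℝ f) := hf.fderiv_right (by norm_num)
  have hlip : ‖fderiv ℝ f V - fderiv ℝ f U‖ ≤ L * ‖V - U‖ :=
    hs.norm_image_sub_le_of_norm_fderiv_le
      (fun x _ => (h1.differentiable one_ne_zero).differentiableAt)
      (fun x hx => le_trans (norm_fderiv2_le f x) (hL x hx)) hU hV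
  set w := gradient f V - gradient f U with hw
  have hsq : ‖w‖ ^ 2 = (fderiv ℝ f V - fderiv ℝ f U) w := by
    have : ⟪w, w⟫ = ⟪gradient f V, w⟫ - ⟪gradient f U, w⟫ := by
      rw [hw, inner_sub_left]
    rw [← real_inner_self_eq_norm_sq, this, inner_gradient_eq, inner_gradient_eq]
    simp
  rcases eq_or_ne w 0 with h0 | h0
  · rw [hw] at h0
    rw [hw, h0, norm_zero]
    have hL0 : 0 ≤ L := le_trans (norm_nonneg _) (hL U hU)
    exact mul_nonneg hL0 (norm_nonneg _)
  · have hwpos : (0:ℝ) < ‖w‖ := norm_pos_iff.mpr h0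
    have : ‖w‖ ^ 2 ≤ (L * ‖V - U‖) * ‖w‖ := by
      rw [hsq]
      calc (fderiv ℝ f V - fderiv ℝ f U) w ≤ ‖(fderiv ℝ f V - fderiv ℝ f U) w‖ :=
            le_abs_self _
        _ ≤ ‖fderiv ℝ f V - fderiv ℝ f U‖ * ‖w‖ := ContinuousLinearMap.le_opNorm _ _
        _ ≤ (L * ‖V - U‖) * ‖w‖ := by
            exact mul_le_mul_of_nonneg_right hlip (norm_nonneg _)
    have := le_of_mul_le_mul_right (by linarith [this, sq_abs ‖w‖] : ‖w‖ * ‖w‖ ≤ (L * ‖V - U‖) * ‖w‖) hwpos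
    exact this

lemma descent_lemma (f : E → ℝ) (hf : ContDiff ℝ 2 f) {s : Set E} (hs : Convex ℝ s)
    {L : ℝ} (hL : ∀ U ∈ s, ‖iteratedFDeriv ℝ 2 f U‖ ≤ L) {U V : E} (hU : U ∈ s) (hV : V ∈ s) :
    f V ≤ f U + ⟪gradient f U, V - U⟫ + L / 2 * ‖V - U‖ ^ 2 := by
  have hdf : Differentiable ℝ f := hf.differentiable (by norm_num)
  set d := V - U with hd
  set ψ : ℝ → ℝ := fun t => f (U + t • d) - t * ⟪gradient f U, d⟫ - L * t ^ 2 * ‖d‖ ^ 2 / 2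
    with hψ
  have hmem : ∀ t ∈ Set.Icc (0:ℝ) 1, U + t • d ∈ s := by
    intro t ht
    have := hs hU hV (by linarith [ht.2] : (0:ℝ) ≤ 1 - t) ht.1 (by ring)
    convert this using 1
    rw [hd]
    module
  have hderiv : ∀ t : ℝ, HasDerivAt ψ
      (⟪gradient f (U + t • d), d⟫ - ⟪gradient f U, d⟫ - L * t * ‖d‖ ^ 2) t := by
    intro t
    have h1 := hasDerivAt_line f hdf U d t
    have h2 : HasDerivAt (fun t : ℝ => t * ⟪gradient f U, d⟫) ⟪gradient f U, d⟫ t := by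
      simpa using (hasDerivAt_id t).mul_const ⟪gradient f U, d⟫
    have h3 : HasDerivAt (fun t : ℝ => L * t ^ 2 * ‖d‖ ^ 2 / 2) (L * t * ‖d‖ ^ 2) t := by
      have : HasDerivAt (fun t : ℝ => t ^ 2) (2 * t) t := by
        simpa using hasDerivAt_pow 2 t
      have := ((this.const_mul L).mul_const (‖d‖ ^ 2)).div_const 2
      exact this.congr_deriv (by ring)
    exact (h1.sub h2).sub h3
  have hanti : AntitoneOn ψ (Set.Icc (0:ℝ) 1) := by
    apply antitoneOn_of_deriv_nonpos (convex_Icc 0 1)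
    · exact Continuous.continuousOn (by
        have : Continuous fun t : ℝ => f (U + t • d) :=
          hdf.continuous.comp (by continuity)
        fun_prop (disch := exact this.continuous))
    · intro t ht
      exact ((hderiv t).differentiableAt).differentiableWithinAt
    · intro t ht
      rw [interior_Icc] at ht
      rw [(hderiv t).deriv]
      have hts : U + t • d ∈ s := hmem t ⟨le_of_lt ht.1, le_of_lt ht.2⟩
      have hlip : ‖gradient f (U + t • d) - gradient f U‖ ≤ L * ‖(U + t • d) - U‖ :=
        gradient_lipschitz_on f hf hs hL hU hts
      have hnorm : ‖(U + t • d) - U‖ = t * ‖d‖ := by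
        rw [add_sub_cancel_left, norm_smul, Real.norm_eq_abs, abs_of_pos ht.1]
      have hinner : ⟪gradient f (U + t • d), d⟫ - ⟪gradient f U, d⟫ ≤ L * t * ‖d‖ ^ 2 := by
        rw [← inner_sub_left]
        calc ⟪gradient f (U + t • d) - gradient f U, d⟫
            ≤ ‖gradient f (U + t • d) - gradient f U‖ * ‖d‖ := real_inner_le_norm _ _
          _ ≤ (L * (t * ‖d‖)) * ‖d‖ := by
              apply mul_le_mul_of_nonneg_right _ (norm_nonneg d)
              rw [← hnorm]; exact hlip
          _ = L * t * ‖d‖ ^ 2 := by ring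
      linarith
  have := hanti (Set.left_mem_Icc.mpr zero_le_one) (Set.right_mem_Icc.mpr zero_le_one)
    zero_le_one
  simp only [hψ, zero_smul, add_zero, zero_mul, one_smul, one_mul, one_pow] at this
  have hV' : U + d = V := by rw [hd]; abel
  rw [hV'] at this
  linarith

lemma convex_lower_bound (f : E → ℝ) (hdf : Differentiable ℝ f) {𝒰 : Set E}
    (hconv : ConvexOn ℝ 𝒰 f) {U V : E} (hU : U ∈ 𝒰) (hV : V ∈ 𝒰) :
    f U + ⟪gradient f U, V - U⟫ ≤ f V := by
  set φ : ℝ → ℝ := fun t => f (U + t • (V - U)) with hφ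
  have hφ0 : φ 0 = f U := by simp [hφ]
  have hφ1 : φ 1 = f V := by simp [hφ]
  have hkey : (fun t : ℝ => U + t • (V - U)) = ⇑(AffineMap.lineMap U V : ℝ →ᵃ[ℝ] E) := by
    funext t
    simp [AffineMap.lineMap_apply]
    module
  have hφconv : ConvexOn ℝ ((fun t : ℝ => U + t • (V - U)) ⁻¹' 𝒰) φ := by
    rw [hφ, show (fun t : ℝ => f (U + t • (V - U))) = f ∘ (fun t : ℝ => U + t • (V - U))
      from rfl, hkey]
    exact hconv.comp_affineMap (AffineMap.lineMap U V : ℝ →ᵃ[ℝ] E)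
  have h0mem : (0:ℝ) ∈ (fun t : ℝ => U + t • (V - U)) ⁻¹' 𝒰 := by
    simp [Set.mem_preimage]; exact hU
  have h1mem : (1:ℝ) ∈ (fun t : ℝ => U + t • (V - U)) ⁻¹' 𝒰 := by
    simp [Set.mem_preimage]; exact hV
  have hder : HasDerivAt φ ⟪gradient f U, V - U⟫ 0 := by
    have := hasDerivAt_line f hdf U (V - U) 0
    simpa [hφ] using this
  have hslope := hφconv.le_slope_of_hasDerivAt h0mem h1mem zero_lt_one hder
  rw [slope_def_field] at hslope
  rw [hφ0, hφ1] at hslope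
  simp at hslope
  rw [inner_gradient_eq, map_sub]
  linarith

lemma num_step {C a K : ℝ} (hC : 0 < C) (hK : 0 ≤ K) (ha0 : 0 ≤ a)
    (ha : a ≤ C / (K + 4)) : a - a ^ 2 / C ≤ C / (K + 5) := by
  have h4 : (0:ℝ) < K + 4 := by linarith
  have h5 : (0:ℝ) < K + 5 := by linarith
  rw [le_div_iff₀ h4] at ha
  rw [le_div_iff₀ h5]
  set b := a ^ 2 / C with hbdef
  have hb : b * C = a ^ 2 := div_mul_cancel₀ _ (ne_of_gt hC)
  have haC : a ≤ C := by nlinarith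
  have hprod : 0 ≤ (C - a * (K + 4)) * (C - a) := by
    apply mul_nonneg <;> linarith
  have hgoal : (a - b) * (K + 5) * C ≤ C * C := by nlinarith
  exact le_of_mul_le_mul_right hgoal hC

set_option maxHeartbeats 1000000 in
/-- Exact gradient descent in the control variable for a cost `J(x,U)` which is C², convex in
`U`, with minimizer `U*(x) ∈ B_γ(U₀)` for each `x ∈ Ω`: with step `1/L₂` (where `L₂` bounds the
Hessian in `U` on `B_{2γ}(U₀)`), the iterates started at `U₀` stay in `B_{2γ}(U₀)` and satisfy
`J(x, Ψ^k(x,U₀)) − J(x, U*(x)) ≤ (2L₂/(k+4)) γ²`. -/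
theorem control_gradient_descent_estimates
    (n m : ℕ)
    (Ω : Set (EuclideanSpace ℝ (Fin n))) (hΩ : IsCompact Ω)
    (𝒰 : Set (EuclideanSpace ℝ (Fin m))) (h𝒰 : Convex ℝ 𝒰)
    (J : EuclideanSpace ℝ (Fin n) → EuclideanSpace ℝ (Fin m) → ℝ)
    (hJ : ContDiff ℝ 2 (fun p : EuclideanSpace ℝ (Fin n) × EuclideanSpace ℝ (Fin m) =>
      J p.1 p.2))
    (hconv : ∀ x ∈ Ω, ConvexOn ℝ 𝒰 (J x))
    (U₀ : EuclideanSpace ℝ (Fin m)) (hU₀ : U₀ ∈ 𝒰) (γ : ℝ) (hγ : 0 < γ)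
    (hball : closedBall U₀ (3 * γ) ⊆ 𝒰)
    (Ustar : EuclideanSpace ℝ (Fin n) → EuclideanSpace ℝ (Fin m))
    (hUstar_ball : ∀ x ∈ Ω, Ustar x ∈ closedBall U₀ γ)
    (hUstar_min : ∀ x ∈ Ω, ∀ U ∈ 𝒰, J x (Ustar x) ≤ J x U)
    (L₂ : ℝ) (hL₂pos : 0 < L₂)
    (hL₂ : ∀ x ∈ Ω, ∀ U ∈ closedBall U₀ (2 * γ), ‖iteratedFDeriv ℝ 2 (J x) U‖ ≤ L₂)
    (Ψ : EuclideanSpace ℝ (Fin n) → EuclideanSpace ℝ (Fin m) → EuclideanSpace ℝ (Fin m))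
    (hΨ : ∀ x U, Ψ x U = U - (1 / L₂) • gradient (J x) U) :
    ∀ x ∈ Ω, ∀ k : ℕ,
      ‖(Ψ x)^[k] U₀ - U₀‖ ≤ 2 * γ ∧
      (Ψ x)^[k] U₀ ∈ closedBall U₀ (2 * γ) ∧
      J x ((Ψ x)^[k] U₀) - J x (Ustar x) ≤ (2 * L₂ / ((k : ℝ) + 4)) * γ ^ 2 := by
  intro x hx
  -- setup
  have hf : ContDiff ℝ 2 (J x) := by
    have : (J x) = (fun p : EuclideanSpace ℝ (Fin n) × EuclideanSpace ℝ (Fin m) => J p.1 p.2)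
        ∘ (fun U => (x, U)) := rfl
    rw [this]
    exact hJ.comp (contDiff_const.prodMk contDiff_id)
  have hdf : Differentiable ℝ (J x) := hf.differentiable (by norm_num)
  set S : Set (EuclideanSpace ℝ (Fin m)) := closedBall U₀ (2 * γ) with hSdef
  have hSconv : Convex ℝ S := convex_closedBall _ _
  have hSsub : S ⊆ 𝒰 := fun y hy => hball (closedBall_subset_closedBall (by linarith) hy)
  have hL : ∀ U ∈ S, ‖iteratedFDeriv ℝ 2 (J x) U‖ ≤ L₂ := hL₂ x hx
  set Us := Ustar x with hUsdef
  have hUsb : dist Us U₀ ≤ γ := mem_closedBall.mp (hUstar_ball x hx)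
  have hUsS : Us ∈ S := mem_closedBall.mpr (by linarith)
  have hUs𝒰 : Us ∈ 𝒰 := hSsub hUsS
  have hmin : ∀ U ∈ 𝒰, J x Us ≤ J x U := hUstar_min x hx
  have hU₀S : U₀ ∈ S := mem_closedBall_self (by linarith)
  have hconvx : ConvexOn ℝ 𝒰 (J x) := hconv x hx
  -- gradient vanishes at the minimizer
  have hgUs : gradient (J x) Us = 0 := by
    have hloc : IsLocalMin (J x) Us := by
      have hsub : ball Us γ ⊆ 𝒰 := by
        intro y hy
        apply hball
        rw [mem_closedBall] at *
        rw [mem_ball] at hy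
        calc dist y U₀ ≤ dist y Us + dist Us U₀ := dist_triangle _ _ _
          _ ≤ 3 * γ := by linarith
      exact Filter.eventually_of_mem (ball_mem_nhds Us hγ) (fun y hy => hmin y (hsub hy))
    have := hloc.fderiv_eq_zero
    rw [gradient, this, map_zero]
  have hUsn : ‖U₀ - Us‖ ≤ γ := by
    rw [← dist_eq_norm, dist_comm]; exact hUsb
  have hUsU₀ : ‖Us - U₀‖ ≤ γ := by rw [← dist_eq_norm]; exact hUsb
  -- main induction
  have key : ∀ k : ℕ, ‖(Ψ x)^[k] U₀ - Us‖ ≤ γ ∧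
      J x ((Ψ x)^[k] U₀) - J x Us ≤ 2 * L₂ * γ ^ 2 / ((k : ℝ) + 4) := by
    intro k
    induction k with
    | zero =>
      constructor
      · simpa using hUsn
      · have hd := descent_lemma (J x) hf hSconv hL hUsS hU₀S
        rw [hgUs] at hd
        simp only [inner_zero_left, add_zero] at hd
        have h2 : ‖U₀ - Us‖ ^ 2 ≤ γ ^ 2 := by
          apply pow_le_pow_left₀ (norm_nonneg _) hUsn
        have h3 : L₂ / 2 * ‖U₀ - Us‖ ^ 2 ≤ L₂ / 2 * γ ^ 2 :=
          mul_le_mul_of_nonneg_left h2 (by positivity)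
        simp only [Function.iterate_zero_apply]
        push_cast
        linarith
    | succ k ih =>
      obtain ⟨hr, hh⟩ := ih
      set U := (Ψ x)^[k] U₀ with hUdef
      set gU := gradient (J x) U with hgUdef
      have hUS : U ∈ S := by
        rw [hSdef, mem_closedBall, dist_eq_norm]
        calc ‖U - U₀‖ = ‖(U - Us) + (Us - U₀)‖ := by rw [sub_add_sub_cancel]
          _ ≤ ‖U - Us‖ + ‖Us - U₀‖ := norm_add_le _ _
          _ ≤ 2 * γ := by linarith
      have hU𝒰 : U ∈ 𝒰 := hSsub hUS
      have hgnorm : ‖gU‖ ≤ L₂ * ‖U - Us‖ := by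
        have := gradient_lipschitz_on (J x) hf hSconv hL hUsS hUS
        rwa [hgUs, sub_zero] at this
      have hgγ : ‖gU‖ ≤ L₂ * γ := le_trans hgnorm
        (mul_le_mul_of_nonneg_left hr hL₂pos.le)
      have hknn : 0 ≤ J x U - J x Us := by linarith [hmin U hU𝒰]
      -- the key inequality : ⟪gU, U - Us⟫ ≥ h_k + ‖gU‖²/(2L₂)
      set Z := Us + (1 / L₂) • gU with hZdef
      have hZS : Z ∈ S := by
        rw [hSdef, mem_closedBall, dist_eq_norm]
        have : Z - U₀ = (Us - U₀) + (1 / L₂) • gU := by rw [hZdef]; abel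
        rw [this]
        calc ‖(Us - U₀) + (1 / L₂) • gU‖ ≤ ‖Us - U₀‖ + ‖(1 / L₂) • gU‖ := norm_add_le _ _
          _ ≤ γ + (1 / L₂) * ‖gU‖ := by
              rw [norm_smul, Real.norm_eq_abs, abs_of_pos (by positivity)]
              linarith
          _ ≤ γ + (1 / L₂) * (L₂ * ‖U - Us‖) := by
              have := mul_le_mul_of_nonneg_left hgnorm (by positivity : (0:ℝ) ≤ 1 / L₂)
              linarith
          _ ≤ 2 * γ := by
              rw [one_div, inv_mul_cancel_left₀ (ne_of_gt hL₂pos)]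
              linarith
      have hdZ : J x Z ≤ J x Us + 1 / (2 * L₂) * ‖gU‖ ^ 2 := by
        have hd := descent_lemma (J x) hf hSconv hL hUsS hZS
        rw [hgUs] at hd
        simp only [inner_zero_left, add_zero] at hd
        have hZsub : Z - Us = (1 / L₂) • gU := by rw [hZdef]; abel
        rw [hZsub, norm_smul, Real.norm_eq_abs, abs_of_pos (by positivity : (0:ℝ) < 1/L₂)]
          at hd
        calc J x Z ≤ J x Us + L₂ / 2 * (1 / L₂ * ‖gU‖) ^ 2 := hd
          _ = J x Us + 1 / (2 * L₂) * ‖gU‖ ^ 2 := by field_simp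
      have hcZ : J x U + ⟪gU, Us - U⟫ + (1 / L₂) * ‖gU‖ ^ 2 ≤ J x Z := by
        have hc := convex_lower_bound (J x) hdf hconvx hU𝒰 (hSsub hZS)
        have hZU : Z - U = (Us - U) + (1 / L₂) • gU := by rw [hZdef]; abel
        rw [hZU, inner_add_right, real_inner_smul_right, real_inner_self_eq_norm_sq] at hc
        linarith
      have hkey : J x U - J x Us + 1 / (2 * L₂) * ‖gU‖ ^ 2 ≤ ⟪gU, U - Us⟫ := by
        have hflip : ⟪gU, U - Us⟫ = -⟪gU, Us - U⟫ := by
          rw [← inner_neg_right, neg_sub]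
        rw [hflip]
        have h1L : (1:ℝ) / L₂ * ‖gU‖ ^ 2
            = 1 / (2 * L₂) * ‖gU‖ ^ 2 + 1 / (2 * L₂) * ‖gU‖ ^ 2 := by
          field_simp
          ring
        linarith [hdZ, hcZ]
      -- next iterate
      have hiter : (Ψ x)^[k+1] U₀ = U - (1 / L₂) • gU := by
        rw [Function.iterate_succ_apply', ← hUdef, hΨ, hgUdef]
      -- distance contraction
      have hrsq : ‖(Ψ x)^[k+1] U₀ - Us‖ ^ 2 =
          ‖U - Us‖ ^ 2 - 2 * ((1 / L₂) * ⟪gU, U - Us⟫) + (1 / L₂) ^ 2 * ‖gU‖ ^ 2 := by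
        rw [hiter]
        have : U - (1 / L₂) • gU - Us = (U - Us) - (1 / L₂) • gU := by abel
        rw [this, norm_sub_sq_real, real_inner_smul_right, norm_smul, Real.norm_eq_abs,
          abs_of_pos (by positivity : (0:ℝ) < 1/L₂), mul_pow, real_inner_comm]
      have hrsq_le : ‖(Ψ x)^[k+1] U₀ - Us‖ ^ 2 ≤ ‖U - Us‖ ^ 2 := by
        rw [hrsq]
        have h1 : (1 / L₂) * (J x U - J x Us + 1 / (2 * L₂) * ‖gU‖ ^ 2) ≤
            (1 / L₂) * ⟪gU, U - Us⟫ :=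
          mul_le_mul_of_nonneg_left hkey (by positivity)
        have h2 : (1 / L₂) * (J x U - J x Us + 1 / (2 * L₂) * ‖gU‖ ^ 2)
            = (1 / L₂) * (J x U - J x Us) + (1 / L₂) ^ 2 * ‖gU‖ ^ 2 / 2 := by
          field_simp
        have h3 : 0 ≤ (1 / L₂) * (J x U - J x Us) :=
          mul_nonneg (by positivity) hknn
        rw [h2] at h1
        linarith
      have hr' : ‖(Ψ x)^[k+1] U₀ - Us‖ ≤ γ := by
        have h2 : ‖(Ψ x)^[k+1] U₀ - Us‖ ^ 2 ≤ γ ^ 2 := by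
          refine le_trans hrsq_le ?_
          apply pow_le_pow_left₀ (norm_nonneg _) hr
        have h3 := norm_nonneg ((Ψ x)^[k+1] U₀ - Us)
        nlinarith [h2, h3, hγ]
      refine ⟨hr', ?_⟩
      -- descent step
      have hU'S : (Ψ x)^[k+1] U₀ ∈ S := by
        rw [hSdef, mem_closedBall, dist_eq_norm]
        calc ‖(Ψ x)^[k+1] U₀ - U₀‖
            = ‖((Ψ x)^[k+1] U₀ - Us) + (Us - U₀)‖ := by rw [sub_add_sub_cancel]
          _ ≤ ‖(Ψ x)^[k+1] U₀ - Us‖ + ‖Us - U₀‖ := norm_add_le _ _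
          _ ≤ 2 * γ := by linarith
      have hdU' : J x ((Ψ x)^[k+1] U₀) ≤ J x U - 1 / (2 * L₂) * ‖gU‖ ^ 2 := by
        have hd := descent_lemma (J x) hf hSconv hL hUS hU'S
        rw [hiter] at hd ⊢
        have hsub : U - (1 / L₂) • gU - U = -((1 / L₂) • gU) := by abel
        rw [hsub, inner_neg_right, real_inner_smul_right, real_inner_self_eq_norm_sq,
          norm_neg, norm_smul, Real.norm_eq_abs,
          abs_of_pos (by positivity : (0:ℝ) < 1/L₂), mul_pow] at hd
        have heq : L₂ / 2 * ((1 / L₂) ^ 2 * ‖gU‖ ^ 2) - (1 / L₂) * ‖gU‖ ^ 2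
            = -(1 / (2 * L₂) * ‖gU‖ ^ 2) := by field_simp; ring
        linarith [hd, heq]
      -- lower bound on the gradient
      have hglow : J x U - J x Us ≤ ‖gU‖ * γ := by
        calc J x U - J x Us ≤ ⟪gU, U - Us⟫ := by
              have hGnn : 0 ≤ 1 / (2 * L₂) * ‖gU‖ ^ 2 := by positivity
              linarith [hkey]
          _ ≤ ‖gU‖ * ‖U - Us‖ := real_inner_le_norm _ _
          _ ≤ ‖gU‖ * γ := mul_le_mul_of_nonneg_left hr (norm_nonneg _)
      -- recursion
      set a := J x U - J x Us with hadef
      have hC : (0:ℝ) < 2 * L₂ * γ ^ 2 := by positivity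
      have hsq : a ^ 2 ≤ ‖gU‖ ^ 2 * γ ^ 2 := by
        have := pow_le_pow_left₀ hknn hglow 2
        calc a ^ 2 ≤ (‖gU‖ * γ) ^ 2 := this
          _ = ‖gU‖ ^ 2 * γ ^ 2 := by ring
      have hstep : J x ((Ψ x)^[k+1] U₀) - J x Us ≤ a - a ^ 2 / (2 * L₂ * γ ^ 2) := by
        have h1 : a ^ 2 / (2 * L₂ * γ ^ 2) ≤ 1 / (2 * L₂) * ‖gU‖ ^ 2 := by
          rw [div_le_iff₀ hC]
          have : 1 / (2 * L₂) * ‖gU‖ ^ 2 * (2 * L₂ * γ ^ 2) = ‖gU‖ ^ 2 * γ ^ 2 := by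
            field_simp
          rw [this]
          exact hsq
        linarith [hdU']
      have hnum := num_step hC (Nat.cast_nonneg k) hknn hh
      push_cast
      calc J x ((Ψ x)^[k+1] U₀) - J x Us ≤ a - a ^ 2 / (2 * L₂ * γ ^ 2) := hstep
        _ ≤ 2 * L₂ * γ ^ 2 / ((k : ℝ) + 5) := hnum
        _ = 2 * L₂ * γ ^ 2 / (((k : ℝ) + 1) + 4) := by ring_nf
  -- conclude
  intro k
  obtain ⟨hr, hh⟩ := key k
  have hnorm : ‖(Ψ x)^[k] U₀ - U₀‖ ≤ 2 * γ := by
    calc ‖(Ψ x)^[k] U₀ - U₀‖ = ‖((Ψ x)^[k] U₀ - Us) + (Us - U₀)‖ := by rw [sub_add_sub_cancel]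
      _ ≤ ‖(Ψ x)^[k] U₀ - Us‖ + ‖Us - U₀‖ := norm_add_le _ _
      _ ≤ 2 * γ := by linarith
  refine ⟨hnorm, mem_closedBall.mpr (by rw [dist_eq_norm]; exact hnorm), ?_⟩
  calc J x ((Ψ x)^[k] U₀) - J x Us ≤ 2 * L₂ * γ ^ 2 / ((k : ℝ) + 4) := hh
    _ = (2 * L₂ / ((k : ℝ) + 4)) * γ ^ 2 := by ring
end
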